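/- arXiv:1212.3708 — 2 statements merged into one kernel-verified Lean document; each statement's English description precedes it below -/
import Mathlib

section
/- Let X be a set and Γ = F(X) the free group on X. For each function ν : X → [1,∞), let ν̄ : Γ → [1,∞) be defined on a reduced word g = x₁^{n₁}⋯x_k^{n_k} by ν̄(g) = ∏_{i=1}^k ν(x_i)^{|n_i|}, and let ℝ[Γ]^∧ν be the Banach algebra obtained by completing the real group algebra ℝ[Γ] with respect to the norm ‖∑_γ λ_γ γ‖_{1,ν} = ∑_γ |λ_γ|·ν̄(γ). Order the set [1,∞)^X pointwise (a directed set). Then for every unital real Banach algebra A there is a bijection, natural in A, between the set of group homomorphisms Γ → Aˣ and the colimit over ν ∈ [1,∞)^X of the sets of continuous unital algebra homomorphisms ℝ[Γ]^∧ν → A. In other words, the functor A ↦ Hom_Grp(F(X), Aˣ) on unital real Banach algebras is pro-representable by the inverse system {ℝ[Γ]^∧ν}_ν. -/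
/-!
Since the reduced word of `g * h` is a sublist of the concatenation of those of `g` and `h`, the
weight `ν̄` is submultiplicative, so `‖·‖_{1,ν}` is a submultiplicative norm; for `ν₁ ≤ ν₂` the
identity of `ℝ[Γ]` is norm-decreasing from `ν₂` to `ν₁` and extends to the completions.
A homomorphism `ρ : Γ →* Aˣ` satisfies `‖ρ γ‖ ≤ max ‖1‖ 1 * ν̄ γ` for
`ν x = max (‖ρ x‖, ‖(ρ x)⁻¹‖, 1)`, so its linear extension is bounded for `‖·‖_{1,ν}` and extends
to `ℝ[Γ]^∧ν`. Two continuous morphisms inducing the same `ρ` agree, after the transition maps, on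
the dense image of `ℝ[Γ]` in `ℝ[Γ]^∧(ν₁ ⊔ ν₂)`.
-/

open scoped BigOperators

/-- Unital real Banach algebras, with continuous unital algebra homomorphisms. -/
structure BanAlg : Type 1 where
  carrier : Type
  [isNormedRing : NormedRing carrier]
  [isNormedAlgebra : NormedAlgebra ℝ carrier]
  [isCompleteSpace : CompleteSpace carrier]

attribute [instance] BanAlg.isNormedRing BanAlg.isNormedAlgebra BanAlg.isCompleteSpace

instance : CoeSort BanAlg Type := ⟨BanAlg.carrier⟩

/-- The weight `ν̄ : FreeGroup X → ℝ` induced by `ν : X → ℝ`: for the reduced word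
`g = x₁^{n₁} ⋯ x_k^{n_k}` it is `∏ i, ν (x_i) ^ |n_i|`. -/
noncomputable def freeGroupWeight {X : Type} [DecidableEq X] (ν : X → ℝ)
    (g : FreeGroup X) : ℝ :=
  ((FreeGroup.toWord g).map fun p => ν p.1).prod

/-- The weighted `ℓ¹`-norm `‖∑ λ_γ γ‖_{1,ν} = ∑ |λ_γ|·ν̄(γ)` on the real group algebra
of the free group. -/
noncomputable def weightedNorm {X : Type} [DecidableEq X] (ν : X → ℝ)
    (p : MonoidAlgebra ℝ (FreeGroup X)) : ℝ :=
  ∑ γ ∈ p.coeff.support, |p.coeff γ| * freeGroupWeight ν γ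

theorem List.Sublist.prod_le_prod_of_one_le {R : Type*} [CommSemiring R] [PartialOrder R]
    [IsOrderedRing R] {l₁ l₂ : List R} (h : l₁.Sublist l₂) (hl : ∀ a ∈ l₂, 1 ≤ a) :
    l₁.prod ≤ l₂.prod := by
  induction h with
  | slnil => rfl
  | cons a _ ih =>
    simp only [List.mem_cons, forall_eq_or_imp] at hl
    rw [List.prod_cons]
    exact (ih hl.2).trans (le_mul_of_one_le_left (zero_le_one.trans (List.one_le_prod hl.2)) hl.1)
  | cons_cons a _ ih =>
    simp only [List.mem_cons, forall_eq_or_imp] at hl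
    rw [List.prod_cons, List.prod_cons]
    exact mul_le_mul_of_nonneg_left (ih hl.2) (zero_le_one.trans hl.1)

theorem List.norm_prod_le_max_norm_one_mul {A : Type*} [SeminormedRing A] (l : List A) :
    ‖l.prod‖ ≤ max ‖(1 : A)‖ 1 * (l.map norm).prod := by
  rcases eq_or_ne l [] with rfl | hl
  · simp
  · exact (List.norm_prod_le' hl).trans <| le_mul_of_one_le_left
      (List.prod_nonneg fun _ ha ↦ by obtain ⟨a, -, rfl⟩ := List.mem_map.1 ha; exact norm_nonneg a)
      (le_max_right _ _)

theorem FreeGroup.map_eq_prod_toWord {X G : Type*} [DecidableEq X] [Group G]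
    (ρ : FreeGroup X →* G) (γ : FreeGroup X) :
    ρ γ = (γ.toWord.map fun p ↦ cond p.2 (ρ (of p.1)) (ρ (of p.1))⁻¹).prod := by
  conv_lhs => rw [← FreeGroup.lift.apply_symm_apply ρ, ← FreeGroup.mk_toWord (x := γ)]
  exact FreeGroup.lift_mk

section Weight

variable {X : Type} [DecidableEq X] {ν : X → ℝ}

theorem one_le_freeGroupWeight (hν : ∀ x, 1 ≤ ν x) (g : FreeGroup X) :
    1 ≤ freeGroupWeight ν g :=
  List.one_le_prod fun _ ha ↦ by obtain ⟨p, -, rfl⟩ := List.mem_map.1 ha; exact hν p.1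

theorem freeGroupWeight_pos (hν : ∀ x, 1 ≤ ν x) (g : FreeGroup X) : 0 < freeGroupWeight ν g :=
  zero_lt_one.trans_le (one_le_freeGroupWeight hν g)

theorem freeGroupWeight_mul_le (hν : ∀ x, 1 ≤ ν x) (g h : FreeGroup X) :
    freeGroupWeight ν (g * h) ≤ freeGroupWeight ν g * freeGroupWeight ν h := by
  unfold freeGroupWeight
  rw [← List.prod_append, ← List.map_append]
  refine ((FreeGroup.toWord_mul_sublist g h).map _).prod_le_prod_of_one_le fun _ ha ↦ ?_
  obtain ⟨p, -, rfl⟩ := List.mem_map.1 ha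
  exact hν p.1

theorem freeGroupWeight_mono {ν₁ ν₂ : X → ℝ} (h₀ : 0 ≤ ν₁) (h : ν₁ ≤ ν₂) (g : FreeGroup X) :
    freeGroupWeight ν₁ g ≤ freeGroupWeight ν₂ g :=
  List.prod_map_le_prod_map₀ _ _ (fun p _ ↦ h₀ p.1) fun p _ ↦ h p.1

end Weight

section WeightedNorm

variable {X : Type} [DecidableEq X] {ν : X → ℝ}

theorem weightedNorm_eq_sum_of_support_subset {p : MonoidAlgebra ℝ (FreeGroup X)}
    {s : Finset (FreeGroup X)} (hs : p.coeff.support ⊆ s) :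
    weightedNorm ν p = ∑ γ ∈ s, |p.coeff γ| * freeGroupWeight ν γ :=
  Finset.sum_subset hs fun γ _ hγ ↦ by rw [Finsupp.notMem_support_iff.1 hγ, abs_zero, zero_mul]

theorem weightedNorm_nonneg (hν : ∀ x, 1 ≤ ν x) (p : MonoidAlgebra ℝ (FreeGroup X)) :
    0 ≤ weightedNorm ν p :=
  Finset.sum_nonneg fun γ _ ↦ mul_nonneg (abs_nonneg _) (freeGroupWeight_pos hν γ).le

theorem weightedNorm_zero : weightedNorm ν (0 : MonoidAlgebra ℝ (FreeGroup X)) = 0 := by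
  simp [weightedNorm]

theorem weightedNorm_eq_zero_iff (hν : ∀ x, 1 ≤ ν x) {p : MonoidAlgebra ℝ (FreeGroup X)} :
    weightedNorm ν p = 0 ↔ p = 0 := by
  refine ⟨fun h ↦ ?_, fun h ↦ h ▸ weightedNorm_zero⟩
  rw [weightedNorm, Finset.sum_eq_zero_iff_of_nonneg
    fun γ _ ↦ mul_nonneg (abs_nonneg _) (freeGroupWeight_pos hν γ).le] at h
  ext γ
  by_contra hγ
  exact (mul_pos (abs_pos.2 hγ) (freeGroupWeight_pos hν γ)).ne'
    (h γ (Finsupp.mem_support_iff.2 hγ))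

theorem weightedNorm_add_le (hν : ∀ x, 1 ≤ ν x) (p q : MonoidAlgebra ℝ (FreeGroup X)) :
    weightedNorm ν (p + q) ≤ weightedNorm ν p + weightedNorm ν q := by
  rw [weightedNorm_eq_sum_of_support_subset (p := p + q) Finsupp.support_add,
    weightedNorm_eq_sum_of_support_subset (Finset.subset_union_left (s₂ := q.coeff.support)),
    weightedNorm_eq_sum_of_support_subset (Finset.subset_union_right (s₁ := p.coeff.support)),
    ← Finset.sum_add_distrib]
  refine Finset.sum_le_sum fun γ _ ↦ ?_
  rw [← add_mul, MonoidAlgebra.coeff_add, Finsupp.add_apply]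
  exact mul_le_mul_of_nonneg_right (abs_add_le _ _) (freeGroupWeight_pos hν γ).le

theorem weightedNorm_neg (p : MonoidAlgebra ℝ (FreeGroup X)) :
    weightedNorm ν (-p) = weightedNorm ν p := by
  simp only [weightedNorm, MonoidAlgebra.coeff_neg, Finsupp.support_neg, Finsupp.neg_apply,
    abs_neg]

theorem weightedNorm_smul (r : ℝ) (p : MonoidAlgebra ℝ (FreeGroup X)) :
    weightedNorm ν (r • p) = |r| * weightedNorm ν p := by
  rw [weightedNorm_eq_sum_of_support_subset (p := r • p) Finsupp.support_smul, weightedNorm,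
    Finset.mul_sum]
  refine Finset.sum_congr rfl fun γ _ ↦ ?_
  rw [MonoidAlgebra.coeff_smul, Finsupp.smul_apply, smul_eq_mul, abs_mul, mul_assoc]

theorem weightedNorm_single (γ : FreeGroup X) (c : ℝ) :
    weightedNorm ν (MonoidAlgebra.single γ c) = |c| * freeGroupWeight ν γ := by
  rw [weightedNorm_eq_sum_of_support_subset (p := MonoidAlgebra.single γ c)
    Finsupp.support_single_subset]
  simp [MonoidAlgebra.coeff_single]

theorem weightedNorm_sum_le (hν : ∀ x, 1 ≤ ν x) {ι : Type*} (s : Finset ι)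
    (f : ι → MonoidAlgebra ℝ (FreeGroup X)) :
    weightedNorm ν (∑ i ∈ s, f i) ≤ ∑ i ∈ s, weightedNorm ν (f i) :=
  Finset.le_sum_of_subadditive _ weightedNorm_zero.le (weightedNorm_add_le hν) s f

theorem weightedNorm_mul_le (hν : ∀ x, 1 ≤ ν x) (p q : MonoidAlgebra ℝ (FreeGroup X)) :
    weightedNorm ν (p * q) ≤ weightedNorm ν p * weightedNorm ν q := by
  have single_mul_le (γ δ : FreeGroup X) : weightedNorm ν
      (MonoidAlgebra.single (γ * δ) (p.coeff γ * q.coeff δ)) ≤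
        |p.coeff γ| * freeGroupWeight ν γ * (|q.coeff δ| * freeGroupWeight ν δ) := by
    rw [weightedNorm_single, abs_mul, mul_mul_mul_comm]
    exact mul_le_mul_of_nonneg_left (freeGroupWeight_mul_le hν γ δ) (by positivity)
  rw [MonoidAlgebra.mul_def]
  simp only [Finsupp.sum]
  calc _ ≤ ∑ γ ∈ p.coeff.support, ∑ δ ∈ q.coeff.support,
          |p.coeff γ| * freeGroupWeight ν γ * (|q.coeff δ| * freeGroupWeight ν δ) :=
        (weightedNorm_sum_le hν _ _).trans <| Finset.sum_le_sum fun γ _ ↦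
          (weightedNorm_sum_le hν _ _).trans <| Finset.sum_le_sum fun δ _ ↦ single_mul_le γ δ
    _ = _ := (Finset.sum_mul_sum _ _ _ _).symm

theorem weightedNorm_mono {ν₁ ν₂ : X → ℝ} (h₀ : 0 ≤ ν₁) (h : ν₁ ≤ ν₂)
    (p : MonoidAlgebra ℝ (FreeGroup X)) : weightedNorm ν₁ p ≤ weightedNorm ν₂ p :=
  Finset.sum_le_sum fun γ _ ↦
    mul_le_mul_of_nonneg_left (freeGroupWeight_mono h₀ h γ) (abs_nonneg _)

end WeightedNorm

noncomputable def weightedRingNorm {X : Type} [DecidableEq X] (ν : X → ℝ) (hν : ∀ x, 1 ≤ ν x) :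
    RingNorm (MonoidAlgebra ℝ (FreeGroup X)) where
  toFun := weightedNorm ν
  map_zero' := weightedNorm_zero
  add_le' := weightedNorm_add_le hν
  neg' := weightedNorm_neg
  mul_le' := weightedNorm_mul_le hν
  eq_zero_of_map_eq_zero' _ := (weightedNorm_eq_zero_iff hν).1

namespace UniformSpace.Completion

variable {R A B : Type*} [CommSemiring R]
  [Ring A] [UniformSpace A] [IsUniformAddGroup A] [IsTopologicalRing A] [Algebra R A]
  [UniformContinuousConstSMul R A]
  [Ring B] [UniformSpace B] [IsUniformAddGroup B] [IsTopologicalRing B] [Algebra R B]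
  [CompleteSpace B] [T0Space B]

-- Mathlib provides this instance only for commutative `E`.
noncomputable instance {𝕜 E : Type*} [NormedField 𝕜] [SeminormedRing E] [NormedAlgebra 𝕜 E] :
    NormedAlgebra 𝕜 (Completion E) where
  norm_smul_le := norm_smul_le

variable (R A) in
noncomputable def coeAlgHom : A →ₐ[R] Completion A where
  __ := coeRingHom
  commutes' _ := rfl

theorem coeAlgHom_apply (a : A) : coeAlgHom R A a = a := rfl

noncomputable def extensionAlgHom (f : A →ₐ[R] B) (hf : Continuous f) : Completion A →ₐ[R] B where
  __ := extensionHom f.toRingHom hf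
  commutes' r := by
    simp only [RingHom.toMonoidHom_eq_coe, OneHom.toFun_eq_coe, MonoidHom.toOneHom_coe,
      MonoidHom.coe_coe, algebraMap_def, extensionHom_coe]
    exact f.commutes r

theorem extensionAlgHom_coe (f : A →ₐ[R] B) (hf : Continuous f) (a : A) :
    extensionAlgHom f hf a = f a :=
  extensionHom_coe _ hf a

theorem continuous_extensionAlgHom (f : A →ₐ[R] B) (hf : Continuous f) :
    Continuous (extensionAlgHom f hf) :=
  continuous_extension

theorem algHom_ext {C : Type*} [Semiring C] [TopologicalSpace C] [T2Space C] [Algebra R C]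
    {f g : Completion A →ₐ[R] C} (hf : Continuous f) (hg : Continuous g)
    (h : ∀ a : A, f a = g a) : f = g :=
  DFunLike.coe_injective (Completion.ext hf hg h)

end UniformSpace.Completion

abbrev GeneratorWeight (X : Type) : Type := {ν : X → ℝ // ∀ x, 1 ≤ ν x}

/-- `ℝ[F(X)]` normed by `‖·‖_{1,ν}`; a type synonym, so that the norm can be an instance. -/
def WeightedFreeGroupAlgebra (X : Type) [DecidableEq X] (_ν : GeneratorWeight X) : Type :=
  MonoidAlgebra ℝ (FreeGroup X)

namespace WeightedFreeGroupAlgebra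

open UniformSpace

variable {X : Type} [DecidableEq X] (ν : GeneratorWeight X)

noncomputable instance : Ring (WeightedFreeGroupAlgebra X ν) :=
  inferInstanceAs (Ring (MonoidAlgebra ℝ (FreeGroup X)))

noncomputable instance : Algebra ℝ (WeightedFreeGroupAlgebra X ν) :=
  inferInstanceAs (Algebra ℝ (MonoidAlgebra ℝ (FreeGroup X)))

noncomputable instance : NormedRing (WeightedFreeGroupAlgebra X ν) :=
  RingNorm.toNormedRing (R := WeightedFreeGroupAlgebra X ν) (weightedRingNorm ν.1 ν.2)

noncomputable instance : NormedAlgebra ℝ (WeightedFreeGroupAlgebra X ν) where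
  __ : Algebra ℝ (WeightedFreeGroupAlgebra X ν) := inferInstance
  norm_smul_le r p := (weightedNorm_smul r p).le

noncomputable def ofMonoidAlgebra :
    MonoidAlgebra ℝ (FreeGroup X) →ₐ[ℝ] WeightedFreeGroupAlgebra X ν :=
  AlgHom.id ℝ _

noncomputable def toMonoidAlgebra :
    WeightedFreeGroupAlgebra X ν →ₐ[ℝ] MonoidAlgebra ℝ (FreeGroup X) :=
  AlgHom.id ℝ _

variable {ν} in
noncomputable def changeWeight {ν₁ ν₂ : GeneratorWeight X} (_h : ν₁.1 ≤ ν₂.1) :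
    WeightedFreeGroupAlgebra X ν₂ →ₐ[ℝ] WeightedFreeGroupAlgebra X ν₁ :=
  AlgHom.id ℝ _

theorem norm_changeWeight_le {ν₁ ν₂ : GeneratorWeight X} (h : ν₁.1 ≤ ν₂.1)
    (p : WeightedFreeGroupAlgebra X ν₂) : ‖changeWeight h p‖ ≤ ‖p‖ :=
  weightedNorm_mono (fun x ↦ zero_le_one.trans (ν₁.2 x)) h p

theorem continuous_changeWeight {ν₁ ν₂ : GeneratorWeight X} (h : ν₁.1 ≤ ν₂.1) :
    Continuous (changeWeight h) :=
  AddMonoidHomClass.continuous_of_bound _ 1 fun p ↦ (one_mul ‖p‖).symm ▸ norm_changeWeight_le h p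

noncomputable def toCompletion :
    MonoidAlgebra ℝ (FreeGroup X) →ₐ[ℝ] Completion (WeightedFreeGroupAlgebra X ν) :=
  (Completion.coeAlgHom ℝ _).comp (ofMonoidAlgebra ν)

theorem norm_toCompletion (p : MonoidAlgebra ℝ (FreeGroup X)) :
    ‖toCompletion ν p‖ = weightedNorm ν.1 p :=
  Completion.norm_coe _

theorem denseRange_toCompletion : DenseRange (toCompletion ν) :=
  Completion.denseRange_coe (α := WeightedFreeGroupAlgebra X ν)

variable {ν} in
noncomputable def transition {ν₁ ν₂ : GeneratorWeight X} (h : ν₁.1 ≤ ν₂.1) :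
    Completion (WeightedFreeGroupAlgebra X ν₂) →ₐ[ℝ] Completion (WeightedFreeGroupAlgebra X ν₁) :=
  Completion.extensionAlgHom ((Completion.coeAlgHom ℝ _).comp (changeWeight h))
    ((Completion.continuous_coe _).comp (continuous_changeWeight h))

theorem transition_coe {ν₁ ν₂ : GeneratorWeight X} (h : ν₁.1 ≤ ν₂.1)
    (p : WeightedFreeGroupAlgebra X ν₂) : transition h p = (changeWeight h p : Completion _) :=
  Completion.extensionAlgHom_coe _ _ p

theorem transition_toCompletion {ν₁ ν₂ : GeneratorWeight X} (h : ν₁.1 ≤ ν₂.1)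
    (p : MonoidAlgebra ℝ (FreeGroup X)) : transition h (toCompletion ν₂ p) = toCompletion ν₁ p :=
  transition_coe h _

theorem continuous_transition {ν₁ ν₂ : GeneratorWeight X} (h : ν₁.1 ≤ ν₂.1) :
    Continuous (transition h) :=
  Completion.continuous_extensionAlgHom _ _

theorem norm_transition_le {ν₁ ν₂ : GeneratorWeight X} (h : ν₁.1 ≤ ν₂.1)
    (x : Completion (WeightedFreeGroupAlgebra X ν₂)) : ‖transition h x‖ ≤ ‖x‖ := by
  induction x using Completion.induction_on with
  | hp => exact isClosed_le (continuous_transition h).norm continuous_norm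
  | ih p =>
    rw [transition_coe, Completion.norm_coe, Completion.norm_coe]
    exact norm_changeWeight_le h p

theorem comp_transition_eq {B : Type*} [Ring B] [TopologicalSpace B] [T2Space B] [Algebra ℝ B]
    {ν₁ ν₂ ν₃ : GeneratorWeight X} {f₁ : Completion (WeightedFreeGroupAlgebra X ν₁) →ₐ[ℝ] B}
    {f₂ : Completion (WeightedFreeGroupAlgebra X ν₂) →ₐ[ℝ] B} (hf₁ : Continuous f₁)
    (hf₂ : Continuous f₂)
    (h : ∀ γ, f₁ (toCompletion ν₁ (MonoidAlgebra.of ℝ (FreeGroup X) γ)) =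
      f₂ (toCompletion ν₂ (MonoidAlgebra.of ℝ (FreeGroup X) γ)))
    (h₁ : ν₁.1 ≤ ν₃.1) (h₂ : ν₂.1 ≤ ν₃.1) :
    f₁.comp (transition h₁) = f₂.comp (transition h₂) := by
  have on_group_algebra : f₁.comp (toCompletion ν₁) = f₂.comp (toCompletion ν₂) :=
    (MonoidAlgebra.lift ℝ B (FreeGroup X)).symm.injective (MonoidHom.ext h)
  refine Completion.algHom_ext (hf₁.comp (continuous_transition h₁))
    (hf₂.comp (continuous_transition h₂)) fun p ↦ ?_
  rw [AlgHom.comp_apply, AlgHom.comp_apply, transition_coe, transition_coe]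
  exact DFunLike.congr_fun on_group_algebra p

end WeightedFreeGroupAlgebra

section UnitWeight

open UniformSpace WeightedFreeGroupAlgebra

variable {X : Type} [DecidableEq X]

noncomputable def unitWeight {A : Type*} [SeminormedRing A] (ρ : FreeGroup X →* Aˣ) :
    GeneratorWeight X :=
  ⟨fun x ↦ max (max ‖(ρ (.of x) : A)‖ ‖(↑(ρ (.of x))⁻¹ : A)‖) 1, fun _ ↦ le_max_right _ _⟩

theorem norm_units_le_freeGroupWeight {A : Type*} [SeminormedRing A] (ρ : FreeGroup X →* Aˣ)
    (γ : FreeGroup X) :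
    ‖(ρ γ : A)‖ ≤ max ‖(1 : A)‖ 1 * freeGroupWeight (unitWeight ρ).1 γ := by
  have letter_le (p : X × Bool) :
      ‖((cond p.2 (ρ (.of p.1)) (ρ (.of p.1))⁻¹ : Aˣ) : A)‖ ≤ (unitWeight ρ).1 p.1 := by
    cases p.2
    · exact (le_max_right _ _).trans (le_max_left _ _)
    · exact (le_max_left _ _).trans (le_max_left _ _)
  rw [← Units.coeHom_apply, FreeGroup.map_eq_prod_toWord ρ γ, map_list_prod, List.map_map]
  refine (List.norm_prod_le_max_norm_one_mul _).trans ?_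
  rw [List.map_map]
  exact mul_le_mul_of_nonneg_left (List.prod_map_le_prod_map₀ _ _
    (fun _ _ ↦ norm_nonneg _) fun p _ ↦ letter_le p) (zero_le_one.trans (le_max_right _ _))

theorem norm_lift_units_le {A : Type*} [SeminormedRing A] [NormedAlgebra ℝ A]
    (ρ : FreeGroup X →* Aˣ) (p : MonoidAlgebra ℝ (FreeGroup X)) :
    ‖MonoidAlgebra.lift ℝ A (FreeGroup X) ((Units.coeHom A).comp ρ) p‖ ≤
      max ‖(1 : A)‖ 1 * weightedNorm (unitWeight ρ).1 p := by
  rw [MonoidAlgebra.lift_apply, weightedNorm, Finset.mul_sum]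
  refine (norm_sum_le _ _).trans <| Finset.sum_le_sum fun γ _ ↦ ?_
  rw [norm_smul, Real.norm_eq_abs, mul_left_comm]
  exact mul_le_mul_of_nonneg_left (norm_units_le_freeGroupWeight ρ γ) (abs_nonneg _)

noncomputable def liftUnits {A : Type*} [NormedRing A] [NormedAlgebra ℝ A] [CompleteSpace A]
    (ρ : FreeGroup X →* Aˣ) : Completion (WeightedFreeGroupAlgebra X (unitWeight ρ)) →ₐ[ℝ] A :=
  Completion.extensionAlgHom
    ((MonoidAlgebra.lift ℝ A (FreeGroup X) ((Units.coeHom A).comp ρ)).comp (toMonoidAlgebra _))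
    (AddMonoidHomClass.continuous_of_bound _ _ (norm_lift_units_le ρ))

theorem liftUnits_toCompletion_of {A : Type*} [NormedRing A] [NormedAlgebra ℝ A]
    [CompleteSpace A] (ρ : FreeGroup X →* Aˣ) (γ : FreeGroup X) :
    liftUnits ρ (toCompletion _ (MonoidAlgebra.of ℝ (FreeGroup X) γ)) = ρ γ := by
  rw [toCompletion, AlgHom.comp_apply, Completion.coeAlgHom_apply, liftUnits,
    Completion.extensionAlgHom_coe]
  exact MonoidAlgebra.lift_of _ γ

end UnitWeight

open UniformSpace WeightedFreeGroupAlgebra in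
/-- Let `Γ = FreeGroup X`.  For `ν : X → [1,∞)`, the weighted `ℓ¹`-norm `‖·‖_{1,ν}` is a
(submultiplicative) algebra norm on `ℝ[Γ]`, and there is an inverse system
`{ℝ[Γ]^∧ν}_ν` of unital real Banach algebras over the directed set `[1,∞)^X`
(pointwise order), where `ℝ[Γ]^∧ν` is the completion of `ℝ[Γ]` with respect to
`‖·‖_{1,ν}` (i.e. it receives `ℝ[Γ]` isometrically with dense image) with
norm-decreasing transition maps, such that for every unital real Banach algebra `A`
the canonical map `colim_ν Hom_{BanAlg}(ℝ[Γ]^∧ν, A) → Hom_Grp(Γ, Aˣ)`,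
`f ↦ (γ ↦ f(γ))`, is a bijection — i.e. every group homomorphism `Γ → Aˣ` comes from
some `ℝ[Γ]^∧ν`, and two morphisms inducing the same group homomorphism are identified
in the colimit.  (Naturality in `A` holds by construction, the map being given by
composition with the canonical morphisms.)  In other words, the functor
`A ↦ Hom_Grp(F(X), Aˣ)` is pro-representable by the inverse system `{ℝ[Γ]^∧ν}_ν`. -/
theorem freeGroup_banach_proRepresentable (X : Type) [DecidableEq X] :
    (∀ ν : X → ℝ, (∀ x, 1 ≤ ν x) →
      (∀ p, 0 ≤ weightedNorm ν p) ∧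
      (∀ p, weightedNorm ν p = 0 ↔ p = 0) ∧
      (∀ p q, weightedNorm ν (p + q) ≤ weightedNorm ν p + weightedNorm ν q) ∧
      (∀ p q : MonoidAlgebra ℝ (FreeGroup X),
        weightedNorm ν (p * q) ≤ weightedNorm ν p * weightedNorm ν q)) ∧
    ∃ (R : {ν : X → ℝ // ∀ x, 1 ≤ ν x} → BanAlg)
      (ι : ∀ ν, MonoidAlgebra ℝ (FreeGroup X) →ₐ[ℝ] (R ν : Type))
      (T : ∀ ν₁ ν₂ : {ν : X → ℝ // ∀ x, 1 ≤ ν x},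
        ν₁.1 ≤ ν₂.1 → ((R ν₂ : Type) →ₐ[ℝ] (R ν₁ : Type))),
      (∀ ν, DenseRange (ι ν) ∧ ∀ p, ‖ι ν p‖ = weightedNorm ν.1 p) ∧
      (∀ ν₁ ν₂ (h : ν₁.1 ≤ ν₂.1),
        Continuous (T ν₁ ν₂ h) ∧ (∀ x, ‖T ν₁ ν₂ h x‖ ≤ ‖x‖) ∧
        ∀ p, T ν₁ ν₂ h (ι ν₂ p) = ι ν₁ p) ∧
      (∀ (A : BanAlg) (ρ : FreeGroup X →* (A : Type)ˣ),
        ∃ (ν : {ν : X → ℝ // ∀ x, 1 ≤ ν x}) (f : (R ν : Type) →ₐ[ℝ] (A : Type)), Continuous f ∧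
          ∀ γ : FreeGroup X,
            f (ι ν (MonoidAlgebra.of ℝ (FreeGroup X) γ)) = ((ρ γ : (A : Type)ˣ) : A)) ∧
      (∀ (A : BanAlg) (ν₁ ν₂ : {ν : X → ℝ // ∀ x, 1 ≤ ν x})
        (f₁ : (R ν₁ : Type) →ₐ[ℝ] (A : Type)) (f₂ : (R ν₂ : Type) →ₐ[ℝ] (A : Type)),
        Continuous f₁ → Continuous f₂ →
        (∀ γ : FreeGroup X, f₁ (ι ν₁ (MonoidAlgebra.of ℝ (FreeGroup X) γ)) =
          f₂ (ι ν₂ (MonoidAlgebra.of ℝ (FreeGroup X) γ))) →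
        ∃ (ν₃ : {ν : X → ℝ // ∀ x, 1 ≤ ν x}) (h₁ : ν₁.1 ≤ ν₃.1) (h₂ : ν₂.1 ≤ ν₃.1),
          f₁.comp (T ν₁ ν₃ h₁) = f₂.comp (T ν₂ ν₃ h₂)) := by
  refine ⟨fun ν hν ↦ ⟨weightedNorm_nonneg hν, fun _ ↦ weightedNorm_eq_zero_iff hν,
      weightedNorm_add_le hν, weightedNorm_mul_le hν⟩,
    fun ν ↦ ⟨Completion (WeightedFreeGroupAlgebra X ν)⟩, toCompletion, fun _ _ h ↦ transition h,
    fun ν ↦ ⟨denseRange_toCompletion ν, norm_toCompletion ν⟩,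
    fun _ _ h ↦ ⟨continuous_transition h, norm_transition_le h, transition_toCompletion h⟩,
    fun A ρ ↦ ⟨unitWeight ρ, liftUnits ρ, Completion.continuous_extensionAlgHom _ _,
      liftUnits_toCompletion_of ρ⟩, ?_⟩
  intro A ν₁ ν₂ f₁ f₂ hf₁ hf₂ h
  let ν₃ : GeneratorWeight X := ⟨ν₁.1 ⊔ ν₂.1, fun x ↦ (ν₁.2 x).trans le_sup_left⟩
  have h₁ : ν₁.1 ≤ ν₃.1 := le_sup_left
  have h₂ : ν₂.1 ≤ ν₃.1 := le_sup_right
  exact ⟨ν₃, h₁, h₂, comp_transition_eq hf₁ hf₂ h h₁ h₂⟩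
end

section
/- Let B be a unital complex C*-algebra and φ a continuous linear functional on B. Then there exist a positive linear functional f on B (i.e. a linear functional with f(b*b) ≥ 0 for all b ∈ B) and a constant C ≥ 0 such that |φ(b)| ≤ C·f(b*b)^{1/2} for all b ∈ B. Consequently, the topological dual B' is the union, over the directed set of positive linear functionals f, of the images of the duals (B_f)' → B', where B_f is the Hilbert space completion of B with respect to the semi-inner product ⟨a,b⟩_f = f(a*b); i.e. B' = colim_f (B_f)'. -/
/-!
Cauchy–Schwarz in the C⋆-algebra gives, for finitely many `bᵢ` and weights `μᵢ ≥ 0`,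
`∑ μᵢ ‖φ bᵢ‖ ^ 2 ≤ ‖φ‖ ^ 2 ‖∑ μᵢ bᵢ⋆ bᵢ‖`. This is exactly the compatibility condition of the
Mazur–Orlicz form of Hahn–Banach for the sublinear map `‖φ‖ ^ 2 ‖·‖` and the lower bounds
`‖φ b‖ ^ 2` at the points `b⋆ b`, so there is a real-linear `F` with `‖φ b‖ ^ 2 ≤ F (b⋆ b)`.
The complex-linear extension of `F ∘ ℜ` agrees with `F` on self-adjoint elements, hence is a
positive functional `f` with `‖φ b‖ ≤ √(f (b⋆ b))`.
-/

open Finset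
open scoped ComplexConjugate

section MazurOrlicz

variable {E ι : Type*} [AddCommGroup E] [Module ℝ E]

def mazurOrliczCone (p : E → ℝ) (p_hom : ∀ c : ℝ, 0 < c → ∀ x, p (c • x) = c * p x)
    (p_add : ∀ x y, p (x + y) ≤ p x + p y) (x : ι → E) (t : ι → ℝ) :
    ConvexCone ℝ (E × ℝ) where
  carrier := {z | ∃ μ : ι →₀ ℝ, 0 ≤ μ ∧
    z.2 + p (Finsupp.linearCombination ℝ x μ - z.1) ≤ Finsupp.linearCombination ℝ t μ}
  add_mem' := by
    rintro ⟨y₁, r₁⟩ ⟨μ₁, hμ₁, h₁⟩ ⟨y₂, r₂⟩ ⟨μ₂, hμ₂, h₂⟩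
    refine ⟨μ₁ + μ₂, add_nonneg hμ₁ hμ₂, ?_⟩
    have := p_add (Finsupp.linearCombination ℝ x μ₁ - y₁)
      (Finsupp.linearCombination ℝ x μ₂ - y₂)
    simp only [Prod.mk_add_mk, map_add, add_sub_add_comm] at *
    linarith
  smul_mem' := by
    rintro c hc ⟨y, r⟩ ⟨μ, hμ, hyr⟩
    refine ⟨c • μ, smul_nonneg hc.le hμ, ?_⟩
    simp only [Prod.smul_fst, Prod.smul_snd, map_smul, smul_eq_mul, ← smul_sub, p_hom c hc]
    nlinarith

/-- The Mazur–Orlicz theorem. -/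
theorem exists_linearMap_le_sublinear_with_lower_bounds (p : E → ℝ)
    (p_hom : ∀ c : ℝ, 0 < c → ∀ x, p (c • x) = c * p x) (p_add : ∀ x y, p (x + y) ≤ p x + p y)
    (x : ι → E) (t : ι → ℝ) (h : ∀ μ : ι →₀ ℝ, 0 ≤ μ →
      Finsupp.linearCombination ℝ t μ ≤ p (Finsupp.linearCombination ℝ x μ)) :
    ∃ F : E →ₗ[ℝ] ℝ, (∀ y, F y ≤ p y) ∧ ∀ i, t i ≤ F (x i) := by
  have p_zero : p 0 = 0 := by grind [p_hom 2 (by norm_num) 0, smul_zero]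
  set s := mazurOrliczCone p p_hom p_add x t
  have hs : s.Pointed := ⟨0, le_rfl, by simp [p_zero]⟩
  -- Riesz extension of `(0, r) ↦ -r` to a functional `g ≥ 0` on `s`; then `g (y, r) = F y - r`,
  -- and `(-y, -p y) ∈ s`, `(x i, t i) ∈ s` give the two bounds on `F`.
  let f : E × ℝ →ₗ.[ℝ] ℝ :=
    (-LinearMap.snd ℝ E ℝ).toPMap (LinearMap.range (LinearMap.inr ℝ E ℝ))
  have f_nonneg : ∀ z : f.domain, (z : E × ℝ) ∈ s.toPointedCone hs → 0 ≤ f z := by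
    rintro ⟨_, r, rfl⟩ ⟨μ, hμ, hr⟩
    have := h μ hμ
    simp only [LinearMap.inr_apply, sub_zero] at hr
    show 0 ≤ -r
    linarith
  have f_dense : ∀ z, ∃ w : f.domain, (w : E × ℝ) + z ∈ s.toPointedCone hs := by
    rintro ⟨y, r⟩
    exact ⟨⟨(0, -p (-y) - r), _, rfl⟩, 0, le_rfl, by simp⟩
  obtain ⟨g, hgf, hg⟩ := riesz_extension (s.toPointedCone hs) f f_nonneg f_dense
  have hg_inr (r : ℝ) : g (0, r) = -r := hgf ⟨(0, r), r, rfl⟩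
  have hg_apply (y : E) (r : ℝ) : g (y, r) = g (y, 0) - r := by
    rw [sub_eq_add_neg, ← hg_inr, ← map_add, Prod.mk_add_mk, add_zero, zero_add]
  refine ⟨g ∘ₗ LinearMap.inl ℝ E ℝ, fun y => ?_, fun i => ?_⟩
  · have := hg (-y, -p y) ⟨0, le_rfl, by simp⟩
    rw [hg_apply, ← neg_zero, ← Prod.neg_mk, map_neg] at this
    simp only [LinearMap.coe_comp, Function.comp_apply, LinearMap.inl_apply]
    linarith
  · have := hg (x i, t i) ⟨Finsupp.single i 1, Finsupp.single_nonneg.2 zero_le_one,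
      by simp [p_zero]⟩
    rw [hg_apply] at this
    simp only [LinearMap.coe_comp, Function.comp_apply, LinearMap.inl_apply]
    linarith

end MazurOrlicz

theorem exists_complexLinearMap_eq_on_selfAdjoint {A : Type*} [AddCommGroup A] [Module ℂ A]
    [StarAddMonoid A] [StarModule ℂ A] (F : A →ₗ[ℝ] ℝ) :
    ∃ f : A →ₗ[ℂ] ℂ, ∀ a, IsSelfAdjoint a → f a = F a := by
  refine ⟨Module.Dual.extendRCLike (F ∘ₗ (selfAdjoint.submodule ℝ A).subtype ∘ₗ realPart),
    fun a ha => ?_⟩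
  change (F (realPart a : A) : ℂ) - Complex.I * F (realPart (Complex.I • a) : A) = F a
  simp [realPart_I_smul, ha.imaginaryPart, ha.coe_realPart]

section CStarAlgebra

variable {A : Type*} [NonUnitalCStarAlgebra A] [PartialOrder A] [StarOrderedRing A]

theorem star_mul_self_sum_smul_le {ι : Type*} (s : Finset ι) (c : ι → ℂ) (y : ι → A) :
    star (∑ i ∈ s, c i • y i) * ∑ i ∈ s, c i • y i ≤
      (∑ i ∈ s, ‖c i‖ ^ 2) • ∑ i ∈ s, star (y i) * y i := by
  -- With `N = ∑ ‖c i‖ ^ 2`, expanding `∑ i, (N • y i - conj (c i) • u)⋆ (N • y i - conj (c i) • u)`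
  -- gives `N • (N • T - u⋆ u)`, which is therefore nonnegative.
  set u := ∑ i ∈ s, c i • y i
  set N := ∑ i ∈ s, ‖c i‖ ^ 2
  set T := ∑ i ∈ s, star (y i) * y i
  have star_u : star u = ∑ i ∈ s, conj (c i) • star (y i) := by
    simp [u, star_sum, star_smul]
  have hN : ∑ i ∈ s, c i * conj (c i) = N := by simp [N, RCLike.mul_conj]
  have term (i : ι) : star ((N : ℂ) • y i - conj (c i) • u) * ((N : ℂ) • y i - conj (c i) • u)
      = N • N • (star (y i) * y i) - N • ((conj (c i) • star (y i)) * u)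
        - N • (star u * (c i • y i)) + (c i * conj (c i)) • (star u * u) := by
    simp only [star_sub, star_smul, sub_mul, mul_sub, mul_smul_comm, smul_mul_assoc,
      RCLike.star_def, Complex.conj_ofReal, Complex.conj_conj, ← Complex.coe_smul]
    module
  have expand : ∑ i ∈ s, star ((N : ℂ) • y i - conj (c i) • u) * ((N : ℂ) • y i - conj (c i) • u)
      = N • (N • T - star u * u) := by
    simp only [term, sum_add_distrib, sum_sub_distrib, ← smul_sum, ← sum_mul, ← mul_sum,
      ← sum_smul, ← star_u, hN]
    rw [Complex.coe_smul]
    module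
  have hpos : 0 ≤ N • (N • T - star u * u) :=
    expand ▸ sum_nonneg fun i _ => star_mul_self_nonneg _
  have hN_nonneg : 0 ≤ N := sum_nonneg fun i _ => by positivity
  rcases hN_nonneg.eq_or_lt with hN0 | hN0
  · have hc (i) (hi : i ∈ s) : c i = 0 := by
      simpa using (sum_eq_zero_iff_of_nonneg fun i _ => by positivity).1 hN0.symm i hi
    have hu : u = 0 := sum_eq_zero fun i hi => by simp [hc i hi]
    simpa [hu] using smul_nonneg hN_nonneg (sum_nonneg fun i _ => star_mul_self_nonneg (y i))
  · have := smul_nonneg (inv_nonneg.2 hN0.le) hpos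
    rwa [inv_smul_smul₀ hN0.ne', sub_nonneg] at this

theorem sum_norm_apply_sq_le (φ : A →L[ℂ] ℂ) {ι : Type*} (s : Finset ι) (b : ι → A) :
    ∑ i ∈ s, ‖φ (b i)‖ ^ 2 ≤ ‖φ‖ ^ 2 * ‖∑ i ∈ s, star (b i) * b i‖ := by
  set S := ∑ i ∈ s, ‖φ (b i)‖ ^ 2
  set T := ∑ i ∈ s, star (b i) * b i
  set u := ∑ i ∈ s, conj (φ (b i)) • b i
  have hS : 0 ≤ S := sum_nonneg fun i _ => by positivity
  have φ_u : φ u = S := by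
    simp [u, S, map_sum, RCLike.conj_mul]
  have norm_u : ‖u‖ ^ 2 ≤ S * ‖T‖ := by
    have hle := star_mul_self_sum_smul_le s (fun i => conj (φ (b i))) b
    simp only [RCLike.norm_conj] at hle
    calc ‖u‖ ^ 2 = ‖star u * u‖ := by rw [CStarRing.norm_star_mul_self, sq]
      _ ≤ ‖S • T‖ := CStarAlgebra.norm_le_norm_of_nonneg_of_le (star_mul_self_nonneg u) hle
      _ = S * ‖T‖ := by rw [norm_smul, Real.norm_of_nonneg hS]
  have : S ^ 2 ≤ ‖φ‖ ^ 2 * (S * ‖T‖) := by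
    calc S ^ 2 = ‖φ u‖ ^ 2 := by rw [φ_u, Complex.norm_real, Real.norm_of_nonneg hS]
      _ ≤ (‖φ‖ * ‖u‖) ^ 2 := by gcongr; exact φ.le_opNorm u
      _ ≤ ‖φ‖ ^ 2 * (S * ‖T‖) := by rw [mul_pow]; gcongr
  nlinarith [mul_nonneg (sq_nonneg ‖φ‖) (norm_nonneg T)]

theorem linearCombination_norm_apply_sq_le (φ : A →L[ℂ] ℂ) (μ : A →₀ ℝ) (hμ : 0 ≤ μ) :
    Finsupp.linearCombination ℝ (fun b => ‖φ b‖ ^ 2) μ ≤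
      ‖φ‖ ^ 2 * ‖Finsupp.linearCombination ℝ (fun b => star b * b) μ‖ := by
  have key := sum_norm_apply_sq_le φ μ.support fun b => √(μ b) • b
  have hμ' (b : A) : √(μ b) ^ 2 = μ b := Real.sq_sqrt (hμ b)
  simpa [Finsupp.linearCombination_apply, Finsupp.sum, norm_smul, mul_pow, star_smul,
    smul_mul_smul_comm, ← sq, hμ'] using key

end CStarAlgebra

/-- Let `B` be a unital complex C*-algebra and `φ` a continuous linear functional on `B`.
Then there are a positive linear functional `f` on `B` (i.e. `f (b*b) ≥ 0`, in
particular `f (star b * b)` is a nonnegative real) and a constant `C ≥ 0` with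
`|φ(b)| ≤ C · f(b*b)^{1/2}` for all `b`.

Consequently `φ` is continuous for the GNS seminorm `b ↦ f(b*b)^{1/2}`, i.e. it lies in
the image of `(B_f)' → B'` where `B_f` is the Hilbert space completion of `B` with
respect to `⟨a,b⟩_f = f(a*b)`; since the positive functionals are directed, this says
exactly that `B' = colim_f (B_f)'`. -/
theorem continuous_functional_dominated_by_positive
    {B : Type*} [NormedRing B] [StarRing B] [CStarRing B]
    [NormedAlgebra ℂ B] [StarModule ℂ B] [CompleteSpace B]
    (φ : B →L[ℂ] ℂ) :
    ∃ (f : B →ₗ[ℂ] ℂ) (C : ℝ), 0 ≤ C ∧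
      (∀ b : B, 0 ≤ (f (star b * b)).re ∧ (f (star b * b)).im = 0) ∧
      (∀ b : B, ‖φ b‖ ≤ C * Real.sqrt ((f (star b * b)).re)) := by
  let _ : CStarAlgebra B := {}
  let _ := CStarAlgebra.spectralOrder B
  have := CStarAlgebra.spectralOrderedRing B
  obtain ⟨F, -, hF⟩ := exists_linearMap_le_sublinear_with_lower_bounds
    (fun x : B => ‖φ‖ ^ 2 * ‖x‖)
    (fun c hc x => by rw [norm_smul, Real.norm_of_nonneg hc.le, mul_left_comm])
    (fun x y => by rw [← mul_add]; gcongr; exact norm_add_le x y)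
    (fun b => star b * b) (fun b => ‖φ b‖ ^ 2) (linearCombination_norm_apply_sq_le φ)
  obtain ⟨f, hf⟩ := exists_complexLinearMap_eq_on_selfAdjoint F
  have hf_star_mul_self (b : B) : f (star b * b) = F (star b * b) :=
    hf _ (IsSelfAdjoint.star_mul_self b)
  refine ⟨f, 1, zero_le_one, fun b => ?_, fun b => ?_⟩
  · simpa [hf_star_mul_self] using (sq_nonneg _).trans (hF b)
  · rw [hf_star_mul_self, Complex.ofReal_re, one_mul]
    exact Real.le_sqrt_of_sq_le (hF b)
end
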